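/- If f is a twisted generalized moment map with moment one-form α for a G-action preserving an H-twisted generalized complex structure J, and B is a G-invariant 2-form, then f is a twisted generalized moment map for the B-transform e^B J e^{-B} with moment one-form α' given by (α')^ξ = α^ξ + ι_{ξ_M}B. -/
import Mathlib


/-!
An algebraic model of the Cartan calculus on a manifold `M`:
`F` plays the role of the smooth functions `C^∞(M)`, `Vec` the vector fields,
and `k`-forms are alternating `F`-multilinear maps on vector fields.
The exterior derivatives `d0, d1, d2, d3` are given as data, subject to the
usual rules (imposed as hypotheses where needed); interior products and Lie
derivatives (via Cartan's magic formula) are defined from them.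
-/

section
variable (F Vec : Type*) [CommRing F] [Algebra ℝ F] [AddCommGroup Vec] [Module F Vec]

/-- Differential `k`-forms in the algebraic model. -/
abbrev Form (k : ℕ) := Vec [⋀^Fin k]→ₗ[F] F

variable {F Vec}

/-- Evaluation of a 1-form on a vector field. -/
def ev (a : Form F Vec 1) (X : Vec) : F := a ![X]

/-- Interior product of a vector field with a `(n+1)`-form. -/
def iota {n : ℕ} (X : Vec) (ω : Form F Vec (n + 1)) : Form F Vec n :=
  ω.curryLeft X

/-- Lie derivative on 1-forms, via Cartan's magic formula
`L_X a = ι_X (d a) + d (a X)`. -/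
def lie1 (d0 : F → Form F Vec 1) (d1 : Form F Vec 1 → Form F Vec 2)
    (X : Vec) (a : Form F Vec 1) : Form F Vec 1 :=
  iota X (d1 a) + d0 (ev a X)

/-- Lie derivative on 2-forms, via Cartan's magic formula. -/
def lie2 (d1 : Form F Vec 1 → Form F Vec 2) (d2 : Form F Vec 2 → Form F Vec 3)
    (X : Vec) (ω : Form F Vec 2) : Form F Vec 2 :=
  iota X (d2 ω) + d1 (iota X ω)

/-- Lie derivative on 3-forms, via Cartan's magic formula. -/
def lie3 (d2 : Form F Vec 2 → Form F Vec 3) (d3 : Form F Vec 3 → Form F Vec 4)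
    (X : Vec) (ω : Form F Vec 3) : Form F Vec 3 :=
  iota X (d3 ω) + d2 (iota X ω)

/-- The natural pairing `⟨X+α, Y+β⟩ = ½(α(Y) + β(X))` on sections of TM ⊕ T*M. -/
noncomputable def pairing (u v : Vec × Form F Vec 1) : F :=
  algebraMap ℝ F (1 / 2) * (ev u.2 v.1 + ev v.2 u.1)

/-- The `H`-twisted Courant bracket
`[X+α, Y+β]_H = [X,Y] + L_X β - L_Y α - ½ d(ι_X β - ι_Y α) + ι_Y ι_X H`. -/
noncomputable def courant (d0 : F → Form F Vec 1) (d1 : Form F Vec 1 → Form F Vec 2)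
    (bracket : Vec → Vec → Vec) (H : Form F Vec 3)
    (u v : Vec × Form F Vec 1) : Vec × Form F Vec 1 :=
  (bracket u.1 v.1,
    lie1 d0 d1 u.1 v.2 - lie1 d0 d1 v.1 u.2
      - algebraMap ℝ F (1 / 2) • d0 (ev v.2 u.1 - ev u.2 v.1)
      + iota v.1 (iota u.1 H))

end

/-- `u + √-1 v` lies in the `√-1`-eigenbundle `L` of the generalized almost
complex structure `J`, expressed in terms of real sections. -/
def InEigenbundle {F Vec : Type*} [CommRing F] [Algebra ℝ F] [AddCommGroup Vec]
    [Module F Vec] (J : (Vec × Form F Vec 1) → (Vec × Form F Vec 1))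
    (u v : Vec × Form F Vec 1) : Prop :=
  J u = -v ∧ J v = u

/-- The `B`-transform `e^B(X+α) = X + α + ι_X B`. -/
def bTransform {F Vec : Type*} [CommRing F] [Algebra ℝ F] [AddCommGroup Vec]
    [Module F Vec] (B : Form F Vec 2) (u : Vec × Form F Vec 1) :
    Vec × Form F Vec 1 :=
  (u.1, u.2 + iota u.1 B)

/-- Lie derivative on sections of `TM ⊕ T*M`. -/
def lieW {F Vec : Type*} [CommRing F] [Algebra ℝ F] [AddCommGroup Vec]
    [Module F Vec] (d0 : F → Form F Vec 1) (d1 : Form F Vec 1 → Form F Vec 2)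
    (bracket : Vec → Vec → Vec) (X : Vec) (u : Vec × Form F Vec 1) :
    Vec × Form F Vec 1 :=
  (bracket X u.1, lie1 d0 d1 X u.2)

/-- If `f` is a twisted generalized moment map with moment one-form `α` for a
`G`-action preserving an `H`-twisted generalized complex structure `J`
(that is, `ξ_M - √-1(df^ξ + √-1 α^ξ) ∈ L` and `f` is equivariant), and `B` is
a `G`-invariant 2-form, then `f` is a twisted generalized moment map for the
`B`-transform `e^B J e^{-B}` with moment one-form `(α')^ξ = α^ξ + ι_{ξ_M} B`.
Here `𝔤` is presented by a basis with structure constants `c` and fundamental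
vector fields `fv i`, and `f i, α i` are the components of `f` and `α`. -/
theorem moment_map_bTransform
    {F Vec : Type*} [CommRing F] [Algebra ℝ F] [AddCommGroup Vec] [Module F Vec]
    (d0 : F → Form F Vec 1) (d1 : Form F Vec 1 → Form F Vec 2)
    (d2 : Form F Vec 2 → Form F Vec 3)
    (bracket : Vec → Vec → Vec)
    {k : ℕ} (c : Fin k → Fin k → Fin k → ℝ) (fv : Fin k → Vec)
    (J : (Vec × Form F Vec 1) →ₗ[F] (Vec × Form F Vec 1))
    -- the action preserves `J`:
    (hJinv : ∀ i u, lieW d0 d1 bracket (fv i) (J u)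
      = J (lieW d0 d1 bracket (fv i) u))
    (f : Fin k → F) (α : Fin k → Form F Vec 1)
    -- `f` is a twisted generalized moment map with moment one-form `α`:
    (hmom : ∀ i, InEigenbundle (⇑J) (fv i, α i) (0, -(d0 (f i))))
    (hequi : ∀ i j, ev (d0 (f j)) (fv i) = ∑ m, algebraMap ℝ F (c j i m) * f m)
    -- `B` is a `G`-invariant 2-form:
    (B : Form F Vec 2) (hB : ∀ i, lie2 d1 d2 (fv i) B = 0) :
    (∀ i, InEigenbundle (fun u => bTransform B (J (bTransform (-B) u)))
        (fv i, α i + iota (fv i) B) (0, -(d0 (f i)))) ∧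
    (∀ i j, ev (d0 (f j)) (fv i) = ∑ m, algebraMap ℝ F (c j i m) * f m) := by
  refine ⟨fun i => ?_, hequi⟩
  obtain ⟨h1, h2⟩ := hmom i
  have hneg : ∀ (X : Vec), iota (F := F) X (-B) = - iota X B := by
    intro X; ext x; simp [iota]
  have hcan : bTransform (F := F) (Vec := Vec) (-B) (fv i, α i + iota (fv i) B)
      = (fv i, α i) := by
    simp [bTransform, hneg]
  have hz : ∀ (w : Form F Vec 1), bTransform (F := F) (Vec := Vec) (-B) (0, w) = (0, w) := by
    intro w
    have : iota (F := F) (0 : Vec) (-B) = 0 := by ext x; simp [iota]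
    simp [bTransform, this]
  constructor
  · show bTransform B (J (bTransform (-B) (fv i, α i + iota (fv i) B))) = _
    rw [hcan, h1]
    have : iota (F := F) (0 : Vec) B = 0 := by ext x; simp [iota]
    simp [bTransform, this, Prod.ext_iff]
  · show bTransform B (J (bTransform (-B) (0, -d0 (f i)))) = _
    rw [hz, h2]
    rfl
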